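/- Let x, y be unimodular complex sequences of length N and a, b unimodular complex sequences of length L. Define four L×N complex arrays by X₁[i,j] = a_i·x_j, X₂[i,j] = b_i·y_j, X₃[i,j] = −a_i·conj(y_{N-1-j}), and X₄[i,j] = b_i·conj(x_{N-1-j}). Then for every j ∈ {0,…,N−1} and every integer τ with |τ| < L: (i) the j-th column of X₁ and the (N−1−j)-th column of X₄ satisfy ρ_{X_{1,j}}(τ) + ρ_{X_{4,N-1-j}}(τ) = ρ_a(τ) + ρ_b(τ); and (ii) the (N−1−j)-th column of X₃ and the j-th column of X₂ satisfy ρ_{X_{3,N-1-j}}(τ) + ρ_{X_{2,j}}(τ) = ρ_a(τ) + ρ_b(τ). -/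

import Mathlib

open Finset

noncomputable section

/-- 1D aperiodic autocorrelation of a length-`N` complex sequence at integer shift `τ`:
`ρ_x(τ) = Σ x_j * conj (x_{j+τ})`, summed over all `j` with `j` and `j + τ` in `[0, N)`. -/
def acorr (N : ℕ) (x : ℕ → ℂ) (τ : ℤ) : ℂ :=
  ∑ j ∈ Finset.range N,
    if 0 ≤ (j : ℤ) + τ ∧ (j : ℤ) + τ < (N : ℤ) then
      x j * star (x ((j : ℤ) + τ).toNat)
    else 0

/-- 2D aperiodic autocorrelation of an `N₁ × N₂` complex array at integer shifts `(τ₁, τ₂)`. -/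
def acorr2 (N₁ N₂ : ℕ) (X : ℕ → ℕ → ℂ) (τ₁ τ₂ : ℤ) : ℂ :=
  ∑ i ∈ Finset.range N₁, ∑ j ∈ Finset.range N₂,
    if (0 ≤ (i : ℤ) + τ₁ ∧ (i : ℤ) + τ₁ < (N₁ : ℤ)) ∧
       (0 ≤ (j : ℤ) + τ₂ ∧ (j : ℤ) + τ₂ < (N₂ : ℤ)) then
      X i j * star (X ((i : ℤ) + τ₁).toNat ((j : ℤ) + τ₂).toNat)
    else 0

/-- Peak-to-mean envelope power ratio of a length-`L` complex sequence:
`sup_{t ∈ [0,1]} (1/L) * |Σ_{i<L} c_i exp(2π√-1 i t)|²`. -/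
def pmepr (L : ℕ) (c : ℕ → ℂ) : ℝ :=
  ⨆ t : Set.Icc (0 : ℝ) 1,
    (‖∑ i ∈ Finset.range L,
      c i * Complex.exp (2 * Real.pi * Complex.I * (i : ℂ) * ((t : ℝ) : ℂ))‖) ^ 2 / L

lemma acorr_mul_const (L : ℕ) (f : ℕ → ℂ) (c : ℂ) (τ : ℤ) :
    acorr L (fun i => f i * c) τ = Complex.normSq c * acorr L f τ := by
  rw [acorr, acorr, Finset.mul_sum]
  refine Finset.sum_congr rfl fun i _ => ?_
  split_ifs
  · rw [star_mul, Complex.star_def, ← Complex.mul_conj]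
    ring
  · rw [mul_zero]

lemma acorr_mul_const_of_norm_eq_one (L : ℕ) (f : ℕ → ℂ) {c : ℂ} (hc : ‖c‖ = 1) (τ : ℤ) :
    acorr L (fun i => f i * c) τ = acorr L f τ := by
  rw [acorr_mul_const, Complex.normSq_eq_norm_sq, hc]
  norm_num

lemma acorr_neg (L : ℕ) (f : ℕ → ℂ) (τ : ℤ) :
    acorr L (fun i => -f i) τ = acorr L f τ := by
  rw [acorr, acorr]
  refine Finset.sum_congr rfl fun i _ => ?_
  split_ifs
  · rw [star_neg, neg_mul_neg]
  · rfl

theorem stmt_12_general (L N : ℕ) (x y a b : ℕ → ℂ)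
    (hx : ∀ j < N, ‖x j‖ = 1) (hy : ∀ j < N, ‖y j‖ = 1)
    (j : ℕ) (hj : j < N) (τ : ℤ) :
    (acorr L (fun i => a i * x j) τ +
        acorr L (fun i => b i * star (x (N - 1 - (N - 1 - j)))) τ =
      acorr L a τ + acorr L b τ) ∧
    (acorr L (fun i => -(a i * star (y (N - 1 - (N - 1 - j))))) τ +
        acorr L (fun i => b i * y j) τ =
      acorr L a τ + acorr L b τ) := by
  have hjj : N - 1 - (N - 1 - j) = j := by omega
  have hx' : ‖star (x j)‖ = 1 := by rw [norm_star, hx j hj]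
  have hy' : ‖star (y j)‖ = 1 := by rw [norm_star, hy j hj]
  rw [hjj, acorr_neg]
  simp only [acorr_mul_const_of_norm_eq_one _ _ (hx j hj),
    acorr_mul_const_of_norm_eq_one _ _ (hy j hj), acorr_mul_const_of_norm_eq_one _ _ hx',
    acorr_mul_const_of_norm_eq_one _ _ hy', and_self]

/-- pairing the `j`-th column of `X₁` with the `(N-1-j)`-th column of `X₄`,
and the `(N-1-j)`-th column of `X₃` with the `j`-th column of `X₂`, the aperiodic
autocorrelation sums both equal `ρ_a(τ) + ρ_b(τ)`. -/
theorem stmt_12 (L N : ℕ) (x y a b : ℕ → ℂ)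
    (hx : ∀ j < N, ‖x j‖ = 1) (hy : ∀ j < N, ‖y j‖ = 1)
    (ha : ∀ i < L, ‖a i‖ = 1) (hb : ∀ i < L, ‖b i‖ = 1)
    (j : ℕ) (hj : j < N) (τ : ℤ) (hτ : |τ| < (L : ℤ)) :
    (acorr L (fun i => a i * x j) τ +
        acorr L (fun i => b i * star (x (N - 1 - (N - 1 - j)))) τ =
      acorr L a τ + acorr L b τ) ∧
    (acorr L (fun i => -(a i * star (y (N - 1 - (N - 1 - j))))) τ +
        acorr L (fun i => b i * y j) τ =
      acorr L a τ + acorr L b τ) :=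
  stmt_12_general L N x y a b hx hy j hj τ

end
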